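/- arXiv:1006.0396 — 5 statements merged into one kernel-verified Lean document; each statement's English description precedes it below -/
import Mathlib

section
/- Let n ≥ 2 and let U, V be disjoint nonempty open subsets of ℝⁿ. Then the complement ℝⁿ ∖ (U ∪ V) has cardinality 𝔠. -/
open Cardinal

theorem stmt_1 (n : ℕ) (hn : 2 ≤ n) (U V : Set (Fin n → ℝ))
    (hU : IsOpen U) (hV : IsOpen V) (hUne : U.Nonempty) (hVne : V.Nonempty)
    (hdisj : Disjoint U V) :
    #((U ∪ V)ᶜ : Set (Fin n → ℝ)) = Cardinal.continuum := by
  obtain ⟨x, hx⟩ := hUne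
  obtain ⟨y, hy⟩ := hVne
  have hxy : x ≠ y := fun h => Set.disjoint_left.mp hdisj hx (h ▸ hy)
  have hyx0 : y - x ≠ 0 := sub_ne_zero.mpr (Ne.symm hxy)
  -- pick e not in span of y - x
  have hspan : Submodule.span ℝ ({y - x} : Set (Fin n → ℝ)) ≠ ⊤ := by
    intro h
    have h1 : Module.finrank ℝ (Submodule.span ℝ ({y - x} : Set (Fin n → ℝ))) = 1 :=
      finrank_span_singleton hyx0
    have h2 : Module.finrank ℝ (Fin n → ℝ) = n := Module.finrank_fin_fun ℝ
    rw [h, finrank_top, h2] at h1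
    omega
  obtain ⟨e, he⟩ : ∃ e, e ∉ Submodule.span ℝ ({y - x} : Set (Fin n → ℝ)) := by
    by_contra h
    push_neg at h
    exact hspan (Submodule.eq_top_iff'.mpr h)
  have he0 : e ≠ 0 := fun h => he (h ▸ Submodule.zero_mem _)
  have key : ∀ a b : ℝ, a • (y - x) + b • e = 0 → a = 0 ∧ b = 0 := by
    intro a b hab
    have hb : b = 0 := by
      by_contra hb
      apply he
      have h2 : b • e = (-a) • (y - x) := by
        linear_combination (norm := module) hab
      have h3 : e = (b⁻¹ * (-a)) • (y - x) := by
        rw [← smul_smul, ← h2, smul_smul, inv_mul_cancel₀ hb, one_smul]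
      rw [h3]
      exact Submodule.smul_mem _ _ (Submodule.mem_span_singleton_self _)
    refine ⟨?_, hb⟩
    rw [hb, zero_smul, add_zero] at hab
    exact (smul_eq_zero.mp hab).resolve_right hyx0
  obtain ⟨δ, hδ, hball⟩ := Metric.isOpen_iff.mp hV y hy
  set ε := δ / ‖e‖ with hε
  have hεpos : 0 < ε := div_pos hδ (norm_pos_iff.mpr he0)
  have hzV : ∀ t ∈ Set.Ioo (0:ℝ) ε, y + t • e ∈ V := by
    intro t ht
    apply hball
    rw [Metric.mem_ball, dist_eq_norm]
    have : y + t • e - y = t • e := by abel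
    rw [this, norm_smul, Real.norm_eq_abs, abs_of_pos ht.1]
    calc t * ‖e‖ < ε * ‖e‖ := by
          exact mul_lt_mul_of_pos_right ht.2 (norm_pos_iff.mpr he0)
      _ = δ := by rw [hε, div_mul_cancel₀ _ (ne_of_gt (norm_pos_iff.mpr he0))]
  -- for each t, find a point on the segment outside U ∪ V
  have hseg : ∀ t ∈ Set.Ioo (0:ℝ) ε, ∃ w ∈ segment ℝ x (y + t • e), w ∈ (U ∪ V)ᶜ := by
    intro t ht
    by_contra h
    push_neg at h
    have hsub : segment ℝ x (y + t • e) ⊆ U ∪ V := by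
      intro w hw
      by_contra hw'
      exact (h w hw) hw'
    have hconn : IsPreconnected (segment ℝ x (y + t • e)) :=
      (convex_segment x (y + t • e)).isPreconnected
    obtain ⟨p, _, hpU, hpV⟩ := hconn U V hU hV hsub
      ⟨x, left_mem_segment ℝ x _, hx⟩ ⟨y + t • e, right_mem_segment ℝ x _, hzV t ht⟩
    exact Set.disjoint_left.mp hdisj hpU hpV
  choose w hw hwc using hseg
  -- build injective function
  have hcoef : ∀ t (ht : t ∈ Set.Ioo (0:ℝ) ε), ∃ b : ℝ, b ≠ 0 ∧
      w t ht - x = b • (y - x) + (b * t) • e := by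
    intro t ht
    obtain ⟨a, b, ha, hb, hab, habw⟩ := hw t ht
    refine ⟨b, ?_, ?_⟩
    · intro hb0
      rw [hb0, zero_smul, add_zero] at habw
      rw [hb0, add_zero] at hab
      rw [hab, one_smul] at habw
      exact Set.disjoint_left.mp (disjoint_compl_left)
        (habw ▸ hwc t ht) (Set.mem_union_left V hx)
    · have ha' : a = 1 - b := by linarith
      rw [← habw, ha']
      module
  have hinj : Function.Injective (fun t : Set.Ioo (0:ℝ) ε =>
      (⟨w t.1 t.2, hwc t.1 t.2⟩ : ((U ∪ V)ᶜ : Set (Fin n → ℝ)))) := by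
    rintro ⟨t, ht⟩ ⟨s, hs⟩ hts
    simp only [Subtype.mk_eq_mk] at hts
    obtain ⟨b, hb0, hb⟩ := hcoef t ht
    obtain ⟨c, hc0, hc⟩ := hcoef s hs
    rw [hts, hc] at hb
    have : (b - c) • (y - x) + (b * t - c * s) • e = 0 := by
      linear_combination (norm := module) -hb
    obtain ⟨h1, h2⟩ := key _ _ this
    have hbc : b = c := by linarith
    have : t = s := by
      have : b * t = b * s := by rw [hbc] at h2 ⊢; linarith
      exact mul_left_cancel₀ hb0 this
    simp [this]
  apply le_antisymm
  · calc #((U ∪ V)ᶜ : Set (Fin n → ℝ)) ≤ #(Fin n → ℝ) := Cardinal.mk_set_le _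
      _ ≤ 𝔠 := by
        rw [Cardinal.mk_pi]
        simp only [Cardinal.mk_real, Cardinal.prod_const, Cardinal.lift_continuum,
          Cardinal.lift_natCast, Cardinal.mk_fin]
        exact Cardinal.pow_le Cardinal.aleph0_le_continuum (Cardinal.nat_lt_aleph0 n)
  · calc 𝔠 = #(Set.Ioo (0:ℝ) ε) := (Cardinal.mk_Ioo_real hεpos).symm
      _ ≤ #((U ∪ V)ᶜ : Set (Fin n → ℝ)) := Cardinal.mk_le_of_injective hinj
end

section
/- Let n ≥ 2, let κ be a cardinal with ℵ₀ ≤ κ < 𝔠, and let S ⊆ ℝⁿ. Suppose there exist open sets U, V ⊆ ℝⁿ with |ℝⁿ ∖ (U ∪ V)| ≤ κ, |U ∩ S| ≤ κ, and |V ∩ (ℝⁿ ∖ S)| ≤ κ. Then either |S| < 𝔠 or |ℝⁿ ∖ S| < 𝔠. -/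
open Cardinal Set

/-- A nonempty open subset of `Fin n → ℝ` (with `n ≥ 1`) has cardinality at least `𝔠`. -/
private lemma open_mk_aux (n : ℕ) (hn : 1 ≤ n) {W : Set (Fin n → ℝ)} (hW : IsOpen W)
    (hne : W.Nonempty) : Cardinal.continuum ≤ #W := by
  obtain ⟨x, hx⟩ := hne
  obtain ⟨ε, hε, hball⟩ := Metric.isOpen_iff.mp hW x hx
  let i0 : Fin n := ⟨0, hn⟩
  have key : ∀ t : ℝ, t ∈ Set.Ioo (0:ℝ) ε → Function.update x i0 (x i0 + t) ∈ W := by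
    intro t ht
    apply hball
    rw [Metric.mem_ball]
    rw [dist_pi_lt_iff hε]
    intro i
    by_cases hi : i = i0
    · subst hi
      rw [Function.update_self, Real.dist_eq]
      simpa [abs_of_pos ht.1] using ht.2
    · rw [Function.update_of_ne hi]
      simpa using hε
  let f : Set.Ioo (0:ℝ) ε → W := fun t => ⟨Function.update x i0 (x i0 + t.1), key t.1 t.2⟩
  have hf : Function.Injective f := by
    intro t s hts
    have h1 : Function.update x i0 (x i0 + t.1) = Function.update x i0 (x i0 + s.1) :=
      congrArg Subtype.val hts
    have h2 := congrFun h1 i0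
    rw [Function.update_self, Function.update_self] at h2
    exact Subtype.ext (by linarith)
  calc Cardinal.continuum = #(Set.Ioo (0:ℝ) ε) := (Cardinal.mk_Ioo_real hε).symm
    _ ≤ #W := Cardinal.mk_le_of_injective hf

/-- Core lemma: if `U`, `V` are disjoint nonempty open subsets of `Fin n → ℝ` with `n ≥ 2`,
then the complement of `U ∪ V` has cardinality at least `𝔠`. -/
private lemma core_aux (n : ℕ) (hn : 2 ≤ n) {U V : Set (Fin n → ℝ)}
    (hU : IsOpen U) (hV : IsOpen V) (hdisj : Disjoint U V)
    {a b : Fin n → ℝ} (ha : a ∈ U) (hb : b ∈ V) :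
    Cardinal.continuum ≤ #((U ∪ V)ᶜ : Set (Fin n → ℝ)) := by
  have hab : a ≠ b := fun h => hdisj.ne_of_mem ha hb h
  set d : Fin n → ℝ := b - a with hd_def
  have hd : d ≠ 0 := sub_ne_zero.mpr (Ne.symm hab)
  -- find w not in the span of d
  obtain ⟨w, hw⟩ : ∃ w : Fin n → ℝ, w ∉ Submodule.span ℝ {d} := by
    by_contra hcon
    push_neg at hcon
    have htop : Submodule.span ℝ {d} = ⊤ := Submodule.eq_top_iff'.mpr hcon
    have h1 : Module.finrank ℝ (Submodule.span ℝ {d}) = 1 := finrank_span_singleton hd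
    rw [htop] at h1
    have h2 : Module.finrank ℝ (⊤ : Submodule ℝ (Fin n → ℝ)) = Module.finrank ℝ (Fin n → ℝ) := finrank_top ℝ (Fin n → ℝ)
    have h3 : Module.finrank ℝ (Fin n → ℝ) = n := Module.finrank_fin_fun ℝ
    omega
  -- linear independence
  have hind : ∀ α β α' β' : ℝ, α • d + β • w = α' • d + β' • w → α = α' ∧ β = β' := by
    intro α β α' β' heq
    have h2 : (α - α') • d = (β' - β) • w := by
      rw [sub_smul, sub_smul]
      rw [← sub_eq_zero] at heq ⊢
      rw [← sub_eq_zero]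
      abel_nf
      abel_nf at heq
      convert heq using 2
      ring
    by_cases hβ : β' = β
    · subst hβ
      simp only [sub_self, zero_smul] at h2
      have : α - α' = 0 := by
        rcases smul_eq_zero.mp h2 with h | h
        · exact h
        · exact absurd h hd
      constructor
      · linarith [sub_eq_zero.mp this]
      · rfl
    · exfalso
      apply hw
      have hne : β' - β ≠ 0 := sub_ne_zero.mpr hβ
      have : w = ((β' - β)⁻¹ * (α - α')) • d := by
        rw [mul_smul, h2, smul_smul, inv_mul_cancel₀ hne, one_smul]
      rw [this]
      exact Submodule.smul_mem _ _ (Submodule.mem_span_singleton_self d)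
  -- the tent paths
  set c : ℝ → (Fin n → ℝ) := fun t => a + (1/2 : ℝ) • d + t • w with hc_def
  set T : ℝ → Set (Fin n → ℝ) := fun t => segment ℝ a (c t) ∪ segment ℝ (c t) b with hT_def
  have haT : ∀ t, a ∈ T t := fun t => Or.inl (left_mem_segment ℝ a (c t))
  have hbT : ∀ t, b ∈ T t := fun t => Or.inr (right_mem_segment ℝ (c t) b)
  -- each tent meets the complement of U ∪ V
  have hmem : ∀ t : ℝ, ∃ p, p ∈ T t ∧ p ∈ (U ∪ V)ᶜ := by
    intro t
    by_contra hcon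
    push_neg at hcon
    have hsub : T t ⊆ U ∪ V := by
      intro p hp
      by_contra hpc
      exact hcon p hp hpc
    have hpre : IsPreconnected (T t) :=
      IsPreconnected.union (c t) (right_mem_segment ℝ a (c t)) (left_mem_segment ℝ (c t) b)
        (convex_segment a (c t)).isPreconnected (convex_segment (c t) b).isPreconnected
    rcases hpre.subset_or_subset hU hV hdisj hsub with hTU | hTV
    · exact hdisj.ne_of_mem (hTU (hbT t)) hb rfl
    · exact hdisj.ne_of_mem ha (hTV (haT t)) rfl
  choose p hpT hpC using hmem
  -- parametrization of tent points
  have hb_eq : b = a + d := by rw [hd_def]; abel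
  have hparam : ∀ t q, q ∈ T t →
      (∃ u : ℝ, u ∈ Set.Icc (0:ℝ) 1 ∧ q = a + (u/2) • d + (u*t) • w) ∨
      (∃ v : ℝ, v ∈ Set.Icc (0:ℝ) 1 ∧ q = a + ((1+v)/2) • d + (t*(1-v)) • w) := by
    intro t q hq
    rcases hq with hq | hq
    · left
      rw [segment_eq_image] at hq
      obtain ⟨u, hu, hequ⟩ := hq
      refine ⟨u, hu, ?_⟩
      rw [← hequ, hc_def]
      match_scalars <;> ring
    · right
      rw [segment_eq_image] at hq
      obtain ⟨v, hv, heqv⟩ := hq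
      refine ⟨v, hv, ?_⟩
      rw [← heqv, hb_eq, hc_def]
      match_scalars <;> ring
  -- auxiliary: extract coefficient equality from point equalities
  have hcoef : ∀ (α β α' β' : ℝ), a + α • d + β • w = a + α' • d + β' • w →
      α = α' ∧ β = β' := by
    intro α β α' β' heq
    apply hind
    have := heq
    rwa [add_assoc, add_assoc, add_right_inj] at this
  -- injectivity of the witness function
  have hinj : Function.Injective p := by
    intro t s hts
    by_contra htsne
    have hpt : p t ∈ T t := hpT t
    have hps : p t ∈ T s := hts ▸ hpT s
    have hpa : p t ≠ a := by
      intro h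
      exact (hpC t) (h ▸ Or.inl ha)
    have hpb : p t ≠ b := by
      intro h
      exact (hpC t) (h ▸ Or.inr hb)
    rcases hparam t (p t) hpt with ⟨u, hu, hequ⟩ | ⟨v, hv, heqv⟩ <;>
      rcases hparam s (p t) hps with ⟨u', hu', hequ'⟩ | ⟨v', hv', heqv'⟩
    · -- both on first segment
      obtain ⟨h1, h2⟩ := hcoef _ _ _ _ (hequ.symm.trans hequ')
      have huu : u = u' := by linarith
      subst huu
      have hune : u ≠ 0 := by
        intro h0
        apply hpa
        rw [hequ, h0]
        simp
      exact htsne (mul_left_cancel₀ hune h2)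
    · -- first segment of T t, second of T s
      obtain ⟨h1, h2⟩ := hcoef _ _ _ _ (hequ.symm.trans heqv')
      have hv0 : v' = 0 := by
        have := hu.2
        have := hv'.1
        linarith
      have hu1 : u = 1 := by linarith
      rw [hu1, hv0] at h2
      apply htsne
      linarith
    · -- second of T t, first of T s
      obtain ⟨h1, h2⟩ := hcoef _ _ _ _ (heqv.symm.trans hequ')
      have hv0 : v = 0 := by
        have := hu'.2
        have := hv.1
        linarith
      have hu1 : u' = 1 := by linarith
      rw [hu1, hv0] at h2
      apply htsne
      linarith
    · -- both on second segment
      obtain ⟨h1, h2⟩ := hcoef _ _ _ _ (heqv.symm.trans heqv')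
      have hvv : v = v' := by linarith
      subst hvv
      have hvne : v ≠ 1 := by
        intro h1'
        apply hpb
        rw [heqv, h1']
        simp [hb_eq]
      have h1v : (1 : ℝ) - v ≠ 0 := sub_ne_zero.mpr (Ne.symm hvne)
      have h2' : (1 - v) * t = (1 - v) * s := by linarith [h2]
      exact htsne (mul_left_cancel₀ h1v h2')
  -- conclude
  let f : ℝ → ((U ∪ V)ᶜ : Set (Fin n → ℝ)) := fun t => ⟨p t, hpC t⟩
  have hf : Function.Injective f := by
    intro t s h
    exact hinj (congrArg Subtype.val h)
  calc Cardinal.continuum = #ℝ := Cardinal.mk_real.symm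
    _ ≤ #((U ∪ V)ᶜ : Set (Fin n → ℝ)) := Cardinal.mk_le_of_injective hf

theorem stmt_2 (n : ℕ) (hn : 2 ≤ n) (κ : Cardinal)
    (hκ₀ : Cardinal.aleph0 ≤ κ) (hκ : κ < Cardinal.continuum)
    (S : Set (Fin n → ℝ))
    (h : ∃ U V : Set (Fin n → ℝ), IsOpen U ∧ IsOpen V ∧
      #((U ∪ V)ᶜ : Set (Fin n → ℝ)) ≤ κ ∧
      #(U ∩ S : Set (Fin n → ℝ)) ≤ κ ∧
      #(V ∩ Sᶜ : Set (Fin n → ℝ)) ≤ κ) :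
    #(S : Set (Fin n → ℝ)) < Cardinal.continuum ∨
      #(Sᶜ : Set (Fin n → ℝ)) < Cardinal.continuum := by
  obtain ⟨U, V, hU, hV, hcompl, hUS, hVS⟩ := h
  have hsmall : ∀ A B : Set (Fin n → ℝ), #A ≤ κ → #B ≤ κ → #(A ∪ B : Set _) ≤ κ := by
    intro A B h1 h2
    calc #(A ∪ B : Set _) ≤ #A + #B := Cardinal.mk_union_le A B
      _ ≤ κ + κ := add_le_add h1 h2
      _ = κ := Cardinal.add_eq_self hκ₀
  rcases Set.eq_empty_or_nonempty U with hUe | hUne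
  · -- U empty : Sᶜ small
    right
    have hsub : Sᶜ ⊆ (V ∩ Sᶜ) ∪ (U ∪ V)ᶜ := by
      intro x hx
      by_cases hxV : x ∈ V
      · exact Or.inl ⟨hxV, hx⟩
      · refine Or.inr ?_
        simp [hUe, hxV]
    calc #(Sᶜ : Set _) ≤ #((V ∩ Sᶜ) ∪ (U ∪ V)ᶜ : Set _) := Cardinal.mk_le_mk_of_subset hsub
      _ ≤ κ := hsmall _ _ hVS hcompl
      _ < Cardinal.continuum := hκ
  rcases Set.eq_empty_or_nonempty V with hVe | hVne
  · -- V empty : S small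
    left
    have hsub : S ⊆ (U ∩ S) ∪ (U ∪ V)ᶜ := by
      intro x hx
      by_cases hxU : x ∈ U
      · exact Or.inl ⟨hxU, hx⟩
      · refine Or.inr ?_
        simp [hVe, hxU]
    calc #(S : Set _) ≤ #((U ∩ S) ∪ (U ∪ V)ᶜ : Set _) := Cardinal.mk_le_mk_of_subset hsub
      _ ≤ κ := hsmall _ _ hUS hcompl
      _ < Cardinal.continuum := hκ
  -- both nonempty
  exfalso
  have hdisj : Disjoint U V := by
    rw [Set.disjoint_iff_inter_eq_empty]
    by_contra hne
    have hio : IsOpen (U ∩ V) := hU.inter hV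
    have hine : (U ∩ V).Nonempty := Set.nonempty_iff_ne_empty.mpr hne
    have hbig : Cardinal.continuum ≤ #(U ∩ V : Set _) :=
      open_mk_aux n (by omega) hio hine
    have hsub : U ∩ V ⊆ (U ∩ S) ∪ (V ∩ Sᶜ) := by
      intro x hx
      by_cases hxS : x ∈ S
      · exact Or.inl ⟨hx.1, hxS⟩
      · exact Or.inr ⟨hx.2, hxS⟩
    have : #(U ∩ V : Set _) ≤ κ :=
      (Cardinal.mk_le_mk_of_subset hsub).trans (hsmall _ _ hUS hVS)
    exact absurd (hbig.trans this) (not_le.mpr hκ)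
  obtain ⟨a, ha⟩ := hUne
  obtain ⟨b, hb⟩ := hVne
  have hbig : Cardinal.continuum ≤ #((U ∪ V)ᶜ : Set _) := core_aux n hn hU hV hdisj ha hb
  exact absurd (hbig.trans hcompl) (not_le.mpr hκ)
end

section
/- For every cardinal κ with κ < 𝔠, there do not exist open sets U, V ⊆ ℝ such that |ℝ ∖ (U ∪ V)| ≤ κ, |U ∩ C| ≤ κ, and |V ∩ (ℝ ∖ C)| ≤ κ, where C is the ternary Cantor set. In other words, the Cantor set has local bicardinality 𝔠. -/
open Cardinal

/-! Auxiliary lemmas -/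

lemma myCF_nonneg (f : ℕ → Bool) : 0 ≤ Cardinal.cantorFunction (1/3) f :=
  tsum_nonneg fun _ => Cardinal.cantorFunctionAux_nonneg (by norm_num)

lemma myCF_le (f : ℕ → Bool) : Cardinal.cantorFunction (1/3) f ≤ 3/2 := by
  have h := Cardinal.cantorFunction_le (c := 1/3) (f := f) (g := fun _ => true)
    (by norm_num) (by norm_num) (fun n _ => rfl)
  refine h.trans_eq ?_
  have : Cardinal.cantorFunction (1/3) (fun _ => true) = ∑' n : ℕ, (1/3 : ℝ) ^ n := by
    unfold Cardinal.cantorFunction Cardinal.cantorFunctionAux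
    simp
  rw [this, tsum_geometric_of_lt_one (by norm_num) (by norm_num)]
  norm_num

lemma preCantorSet_subset_unitInterval' (n : ℕ) : preCantorSet n ⊆ Set.Icc 0 1 := by
  induction n with
  | zero => simp
  | succ n ih =>
    rintro x (⟨y, hy, rfl⟩ | ⟨y, hy, rfl⟩) <;>
      obtain ⟨h0, h1⟩ := ih hy <;> constructor <;> nlinarith

lemma myMem_preCantorSet (n : ℕ) : ∀ f : ℕ → Bool,
    2/3 * Cardinal.cantorFunction (1/3) f ∈ preCantorSet n := by
  induction n with
  | zero =>
    intro f
    have h0 := myCF_nonneg f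
    have h1 := myCF_le f
    constructor <;> nlinarith
  | succ n ih =>
    intro f
    rw [Cardinal.cantorFunction_succ f (by norm_num) (by norm_num)]
    cases h : f 0 with
    | false =>
      left
      refine ⟨2/3 * Cardinal.cantorFunction (1/3) (fun n => f (n+1)), ih _, ?_⟩
      simp; ring
    | true =>
      right
      refine ⟨2/3 * Cardinal.cantorFunction (1/3) (fun n => f (n+1)), ih _, ?_⟩
      simp; ring

lemma continuum_le_mk_cantorSet : Cardinal.continuum ≤ #cantorSet := by
  have hinj : Function.Injective
      (fun f : ℕ → Bool => (⟨2/3 * Cardinal.cantorFunction (1/3) f,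
        Set.mem_iInter.mpr fun n => myMem_preCantorSet n f⟩ : cantorSet)) := by
    intro f g h
    have h' : (2:ℝ)/3 * Cardinal.cantorFunction (1/3) f
        = 2/3 * Cardinal.cantorFunction (1/3) g := congrArg Subtype.val h
    exact Cardinal.cantorFunction_injective (by norm_num) (by norm_num)
      (mul_left_cancel₀ (by norm_num) h')
  calc Cardinal.continuum = #(ℕ → Bool) := by
        rw [← Cardinal.power_def, Cardinal.mk_bool, Cardinal.mk_nat,
          Cardinal.two_power_aleph0]
    _ ≤ #cantorSet := Cardinal.mk_le_of_injective hinj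

lemma not_Ioo_subset_preCantorSet (n : ℕ) : ∀ a b : ℝ, (1/3 : ℝ)^n < b - a →
    ¬ (Set.Ioo a b ⊆ preCantorSet n) := by
  induction n with
  | zero =>
    intro a b hab hsub
    simp only [pow_zero] at hab
    set ε : ℝ := (b - a - 1)/3 with hε
    have hε0 : 0 < ε := by linarith
    have h1 : a + ε ∈ Set.Ioo a b := by constructor <;> linarith
    have h2 : b - ε ∈ Set.Ioo a b := by constructor <;> linarith
    have g1 := hsub h1
    have g2 := hsub h2
    simp only [preCantorSet_zero, Set.mem_Icc] at g1 g2
    linarith [g1.1, g2.2]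
  | succ n ih =>
    intro a b hab hsub
    have hsplit : ∀ x ∈ Set.Ioo a b, x ≤ 1/3 ∨ (2:ℝ)/3 ≤ x := by
      intro x hx
      rcases hsub hx with ⟨y, hy, rfl⟩ | ⟨y, hy, rfl⟩
      · left
        obtain ⟨_, h1⟩ := preCantorSet_subset_unitInterval' n hy
        linarith
      · right
        obtain ⟨h0, _⟩ := preCantorSet_subset_unitInterval' n hy
        linarith
    have hlt : a < b := by nlinarith [pow_pos (by norm_num : (0:ℝ) < 1/3) (n+1)]
    have hhalf : b ≤ 1/2 ∨ (1:ℝ)/2 ≤ a := by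
      by_contra h
      push_neg at h
      rcases hsplit (1/2) ⟨h.2, h.1⟩ with h' | h' <;> linarith
    have hpow : (1/3 : ℝ)^n < 3*b - 3*a := by
      have : (1/3:ℝ)^(n+1) = (1/3)^n / 3 := by ring
      rw [this] at hab; linarith
    rcases hhalf with hb | ha
    · refine ih (3*a) (3*b) (by linarith) ?_
      intro y hy
      have hy3 : y/3 ∈ Set.Ioo a b := by
        constructor <;> [nlinarith [hy.1]; nlinarith [hy.2]]
      rcases hsub hy3 with ⟨z, hz, hz3⟩ | ⟨z, hz, hz3⟩
      · have : y = z := by field_simp at hz3; linarith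
        rwa [this]
      · exfalso
        obtain ⟨h0, _⟩ := preCantorSet_subset_unitInterval' n hz
        have : y/3 < 1/2 := lt_of_lt_of_le hy3.2 hb
        nlinarith
    · refine ih (3*a - 2) (3*b - 2) (by linarith) ?_
      intro y hy
      have hy3 : (2+y)/3 ∈ Set.Ioo a b := by
        constructor <;> [nlinarith [hy.1]; nlinarith [hy.2]]
      rcases hsub hy3 with ⟨z, hz, hz3⟩ | ⟨z, hz, hz3⟩
      · exfalso
        obtain ⟨_, h1⟩ := preCantorSet_subset_unitInterval' n hz
        have : (1:ℝ)/2 ≤ (2+y)/3 := ha.trans hy3.1.le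
        nlinarith
      · have : y = z := by field_simp at hz3; linarith
        rwa [this]

lemma not_Ioo_subset_cantorSet {a b : ℝ} (hab : a < b) : ¬ (Set.Ioo a b ⊆ cantorSet) := by
  obtain ⟨n, hn⟩ := exists_pow_lt_of_lt_one (sub_pos.mpr hab) (by norm_num : (1/3:ℝ) < 1)
  intro hsub
  exact not_Ioo_subset_preCantorSet n a b hn
    (hsub.trans (Set.iInter_subset _ n))

lemma continuum_le_of_isOpen {W : Set ℝ} (hW : IsOpen W) (hne : W.Nonempty) :
    Cardinal.continuum ≤ #W := by
  obtain ⟨x, hx⟩ := hne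
  obtain ⟨ε, hε, hball⟩ := Metric.isOpen_iff.mp hW x hx
  have hsub : Set.Ioo (x - ε) (x + ε) ⊆ W := by
    rw [← Real.ball_eq_Ioo]; exact hball
  calc Cardinal.continuum = #(Set.Ioo (x - ε) (x + ε)) :=
        (Cardinal.mk_Ioo_real (by linarith)).symm
    _ ≤ #W := Cardinal.mk_le_mk_of_subset hsub

theorem stmt_3 (κ : Cardinal) (hκ : κ < Cardinal.continuum) :
    ¬ ∃ U V : Set ℝ, IsOpen U ∧ IsOpen V ∧
      #(((U ∪ V)ᶜ : Set ℝ)) ≤ κ ∧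
      #((U ∩ cantorSet : Set ℝ)) ≤ κ ∧
      #((V ∩ cantorSetᶜ : Set ℝ)) ≤ κ := by
  rintro ⟨U, V, hU, hV, h1, h2, h3⟩
  by_cases hVC : (V ∩ cantorSet).Nonempty
  · -- V meets the Cantor set; then V ∩ cantorSetᶜ is a nonempty open set
    have hopen : IsOpen (V ∩ cantorSetᶜ) := hV.inter isClosed_cantorSet.isOpen_compl
    have hne : (V ∩ cantorSetᶜ).Nonempty := by
      by_contra h
      rw [Set.not_nonempty_iff_eq_empty] at h
      have hVsub : V ⊆ cantorSet := by
        intro x hx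
        by_contra hxc
        exact Set.eq_empty_iff_forall_notMem.mp h x ⟨hx, hxc⟩
      obtain ⟨x, hxV, _⟩ := hVC
      obtain ⟨ε, hε, hball⟩ := Metric.isOpen_iff.mp hV x hxV
      refine not_Ioo_subset_cantorSet (a := x - ε) (b := x + ε) (by linarith) ?_
      rw [← Real.ball_eq_Ioo]
      exact hball.trans hVsub
    exact absurd ((continuum_le_of_isOpen hopen hne).trans h3) (not_le.mpr hκ)
  · -- V misses the Cantor set; then cantorSet ⊆ (U ∩ cantorSet) ∪ (U ∪ V)ᶜ
    rw [Set.not_nonempty_iff_eq_empty] at hVC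
    have hsub : cantorSet ⊆ (U ∩ cantorSet) ∪ (U ∪ V)ᶜ := by
      intro x hx
      by_cases hxU : x ∈ U
      · exact Or.inl ⟨hxU, hx⟩
      · refine Or.inr ?_
        rintro (h | h)
        · exact hxU h
        · exact Set.eq_empty_iff_forall_notMem.mp hVC x ⟨h, hx⟩
    have : Cardinal.continuum ≤ κ + κ :=
      calc Cardinal.continuum ≤ #cantorSet := continuum_le_mk_cantorSet
        _ ≤ #((U ∩ cantorSet) ∪ (U ∪ V)ᶜ : Set ℝ) := Cardinal.mk_le_mk_of_subset hsub
        _ ≤ #(U ∩ cantorSet : Set ℝ) + #(((U ∪ V)ᶜ : Set ℝ)) := Cardinal.mk_union_le _ _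
        _ ≤ κ + κ := add_le_add h2 h1
    exact absurd this (not_le.mpr (Cardinal.add_lt_of_lt Cardinal.aleph0_le_continuum hκ hκ))
end

section
/- Let E be a subfield of ℝ, let x₁ ∈ ℝ be transcendental over E, let n ∈ ℕ, and let x₂ ∈ ℝ be algebraic over E(x₁) of degree greater than n. Let g and h be polynomials in two variables Y₁, Y₂ with coefficients in E such that the degree of each of g and h in the variable Y₂ is at most n, h(x₁, x₂) ≠ 0, and g is not of the form a·h for any scalar a ∈ E. Then g(x₁, x₂)/h(x₁, x₂) does not belong to E. -/
/-!
If `g(x₁, x₂) = a • h(x₁, x₂)` with `a ∈ E`, then `p = g - a • h` is a nonzero polynomial vanishing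
at `(x₁, x₂)`. Since `x₁` is transcendental, substituting `x₁` for `Y₁` is injective, so `p`
becomes a nonzero polynomial over `E(x₁)` in `Y₂` of degree `≤ n` with root `x₂`; it is then a
multiple of the minimal polynomial of `x₂`, whose degree exceeds `n`.
-/

open IntermediateField MvPolynomial

namespace IntermediateField

variable {F L : Type*} [Field F] [Field L] [Algebra F L]

theorem injective_mvPolynomial_aeval_gen_of_transcendental {x : L} (hx : Transcendental F x) :
    Function.Injective (MvPolynomial.aeval (R := F) fun _ : Fin 1 => AdjoinSimple.gen F x) := by
  have hinj : Function.Injective (MvPolynomial.aeval (R := F) (fun _ : Fin 1 => x)) := by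
    rwa [← algebraicIndependent_iff_injective_aeval, algebraicIndependent_unique_type_iff]
  refine Function.Injective.of_comp (f := F⟮x⟯.val) ?_
  convert hinj using 1
  rw [← AlgHom.coe_comp]
  congr 1
  exact MvPolynomial.algHom_ext fun _ => by simp

variable (F) in
/-- Substitute `x` for the variable `0`; the variable `1` becomes the variable of `F⟮x⟯[X]`. -/
noncomputable def bivariateToAdjoin (x : L) : MvPolynomial (Fin 2) F →ₐ[F] Polynomial F⟮x⟯ :=
  (Polynomial.mapAlgHom (MvPolynomial.aeval fun _ : Fin 1 => AdjoinSimple.gen F x)).comp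
    ((finSuccEquiv F 1).toAlgHom.comp (rename (Equiv.swap 0 1)))

theorem injective_bivariateToAdjoin {x : L} (hx : Transcendental F x) :
    Function.Injective (bivariateToAdjoin F x) :=
  (Polynomial.map_injective _ (injective_mvPolynomial_aeval_gen_of_transcendental hx)).comp <|
    (finSuccEquiv F 1).injective.comp (rename_injective _ (Equiv.injective _))

theorem natDegree_bivariateToAdjoin_le (x : L) (p : MvPolynomial (Fin 2) F) :
    (bivariateToAdjoin F x p).natDegree ≤ degreeOf 1 p := by
  calc (bivariateToAdjoin F x p).natDegree
      ≤ (finSuccEquiv F 1 (rename (Equiv.swap 0 1) p)).natDegree := Polynomial.natDegree_map_le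
    _ = degreeOf 0 (rename (Equiv.swap 0 1) p) := natDegree_finSuccEquiv _
    _ = degreeOf 1 p := by
      rw [← Equiv.swap_apply_right (0 : Fin 2) 1]
      exact degreeOf_rename_of_injective (Equiv.injective _) _

theorem aeval_bivariateToAdjoin (x y : L) (p : MvPolynomial (Fin 2) F) :
    Polynomial.aeval y (bivariateToAdjoin F x p) = MvPolynomial.aeval ![x, y] p := by
  suffices ((Polynomial.aeval (R := F⟮x⟯) y).restrictScalars F).comp (bivariateToAdjoin F x) =
      MvPolynomial.aeval ![x, y] from congr($this p)
  refine MvPolynomial.algHom_ext fun i => ?_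
  fin_cases i
  · have hX : finSuccEquiv F 1 (X (Fin.succ 0)) = Polynomial.C (X 0) := finSuccEquiv_X_succ
    rw [Fin.succ_zero_eq_one] at hX
    simp [bivariateToAdjoin, hX]
  · simp [bivariateToAdjoin, finSuccEquiv_X_zero]

theorem natDegree_minpoly_le_degreeOf {x y : L} (hx : Transcendental F x)
    {p : MvPolynomial (Fin 2) F} (hp : p ≠ 0) (hpxy : MvPolynomial.aeval ![x, y] p = 0) :
    (minpoly F⟮x⟯ y).natDegree ≤ degreeOf 1 p := by
  have hr : bivariateToAdjoin F x p ≠ 0 :=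
    (map_ne_zero_iff _ (injective_bivariateToAdjoin hx)).mpr hp
  have hdvd : minpoly F⟮x⟯ y ∣ bivariateToAdjoin F x p :=
    minpoly.dvd _ _ (by rw [aeval_bivariateToAdjoin, hpxy])
  exact (Polynomial.natDegree_le_of_dvd hdvd hr).trans (natDegree_bivariateToAdjoin_le x p)

end IntermediateField

theorem stmt_13_general (E : Subfield ℝ) (x₁ : ℝ) (hx₁ : Transcendental E x₁)
    (n : ℕ) (x₂ : ℝ)
    (hdeg : n < (minpoly E⟮x₁⟯ x₂).natDegree)
    (g h : MvPolynomial (Fin 2) E)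
    (hg : MvPolynomial.degreeOf 1 g ≤ n) (hh : MvPolynomial.degreeOf 1 h ≤ n)
    (hhne : MvPolynomial.aeval ![x₁, x₂] h ≠ 0)
    (hgh : ∀ a : E, g ≠ MvPolynomial.C a * h) :
    MvPolynomial.aeval ![x₁, x₂] g / MvPolynomial.aeval ![x₁, x₂] h ∉ E := by
  intro hmem
  set a : E := ⟨_, hmem⟩
  have hp : g - C a * h ≠ 0 := sub_ne_zero.mpr (hgh a)
  have hpxy : MvPolynomial.aeval ![x₁, x₂] (g - C a * h) = 0 := by
    rw [map_sub, map_mul, aeval_C]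
    exact sub_eq_zero.mpr (div_mul_cancel₀ _ hhne).symm
  have hpdeg : degreeOf 1 (g - C a * h) ≤ n :=
    (degreeOf_sub_le _ _ _).trans (max_le hg ((degreeOf_C_mul_le _ _ _).trans hh))
  exact hdeg.not_ge ((natDegree_minpoly_le_degreeOf hx₁ hp hpxy).trans hpdeg)

theorem stmt_13 (E : Subfield ℝ) (x₁ : ℝ) (hx₁ : Transcendental E x₁)
    (n : ℕ) (x₂ : ℝ) (halg : IsAlgebraic E⟮x₁⟯ x₂)
    (hdeg : n < (minpoly E⟮x₁⟯ x₂).natDegree)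
    (g h : MvPolynomial (Fin 2) E)
    (hg : MvPolynomial.degreeOf 1 g ≤ n) (hh : MvPolynomial.degreeOf 1 h ≤ n)
    (hhne : MvPolynomial.aeval ![x₁, x₂] h ≠ 0)
    (hgh : ∀ a : E, g ≠ MvPolynomial.C a * h) :
    MvPolynomial.aeval ![x₁, x₂] g / MvPolynomial.aeval ![x₁, x₂] h ∉ E :=
  stmt_13_general E x₁ hx₁ n x₂ hdeg g h hg hh hhne hgh
end

section
/- Let E be a subfield of ℝ, let x₁ ∈ ℝ with x₁ > 0 be transcendental over E, let n ∈ ℕ, let y₂ ∈ ℝ, and let ε > 0. Then there exists x₂ ∈ ℝ with |x₂ − y₂| < ε such that x₂ is algebraic over the subfield ℚ(x₁) of ℝ generated by x₁, and x₂ is algebraic over E(x₁) of degree greater than n. (For instance, x₂ = b + x₁^(1/m) for a prime m > n and a suitable rational b.) -/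
open IntermediateField Polynomial

theorem stmt_15 (E : Subfield ℝ) (x₁ : ℝ) (hx₁pos : 0 < x₁)
    (hx₁ : Transcendental E x₁) (n : ℕ) (y₂ : ℝ) (ε : ℝ) (hε : 0 < ε) :
    ∃ x₂ : ℝ, |x₂ - y₂| < ε ∧
      IsAlgebraic (Subfield.closure {x₁}) x₂ ∧
      IsAlgebraic E⟮x₁⟯ x₂ ∧ n < (minpoly E⟮x₁⟯ x₂).natDegree := by
  obtain ⟨m, hnm, hm⟩ := Nat.exists_infinite_primes (n + 1)
  have hm2 : 2 ≤ m := hm.two_le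
  set u : ℝ := x₁ ^ ((m : ℝ)⁻¹) with hu
  have hupos : 0 < u := Real.rpow_pos_of_pos hx₁pos _
  have hum : u ^ m = x₁ := by
    rw [hu, ← Real.rpow_natCast (x₁ ^ ((m : ℝ)⁻¹)) m, ← Real.rpow_mul hx₁pos.le,
      inv_mul_cancel₀ (by exact_mod_cast hm.pos.ne'), Real.rpow_one]
  obtain ⟨b, hb⟩ := exists_rat_near (y₂ - u) hε
  refine ⟨(b : ℝ) + u, ?_, ?_, ?_, ?_⟩
  · have : |(b : ℝ) + u - y₂| = |y₂ - u - b| := by rw [abs_sub_comm]; ring_nf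
    rw [this]; exact hb
  · -- algebraic over ℚ(x₁)
    set F := Subfield.closure ({x₁} : Set ℝ)
    have hx₁F : x₁ ∈ F := Subfield.subset_closure rfl
    set bF : F := ((b : ℚ) : F)
    have hbF : (bF : ℝ) = (b : ℝ) := by norm_cast
    set aF : F := ⟨x₁, hx₁F⟩
    refine ⟨(X - C bF) ^ m - C aF, ?_, ?_⟩
    · intro h
      have hdeg : (((X - C bF) ^ m - C aF : F[X])).natDegree = m := by
        rw [natDegree_sub_C, natDegree_pow, natDegree_X_sub_C, mul_one]
      rw [h] at hdeg
      simp at hdeg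
      omega
    · have : algebraMap F ℝ bF = (b : ℝ) := hbF
      have h2 : algebraMap F ℝ aF = x₁ := rfl
      simp only [map_sub, map_pow, aeval_X, aeval_C, this, h2]
      simp [hum]
  · -- algebraic over E(x₁)
    have halgu : IsAlgebraic E⟮x₁⟯ u := by
      refine ⟨X ^ m - C (AdjoinSimple.gen E x₁), ?_, ?_⟩
      · exact (monic_X_pow_sub_C _ (by omega)).ne_zero
      · simp only [map_sub, map_pow, aeval_X, aeval_C, AdjoinSimple.algebraMap_gen]
        simp [hum]
    have : IsAlgebraic E⟮x₁⟯ ((b : ℝ)) := by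
      have : (b : ℝ) = algebraMap E⟮x₁⟯ ℝ ((b : ℚ) : E⟮x₁⟯) := by push_cast; rfl
      rw [this]; exact isAlgebraic_algebraMap _
    exact (this.isIntegral.add halgu.isIntegral).isAlgebraic
  · -- degree
    have hpow : ∀ c : E⟮x₁⟯, c ^ m ≠ AdjoinSimple.gen E x₁ := by
      intro c hc
      have hcR : (c : ℝ) ^ m = x₁ := congrArg Subtype.val hc
      obtain ⟨r, s, hrs⟩ := (mem_adjoin_simple_iff E (c : ℝ)).1 c.2
      have hinj : Function.Injective (aeval x₁ : Polynomial E →ₐ[E] ℝ) :=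
        transcendental_iff_injective.mp hx₁
      have hs : aeval x₁ s ≠ 0 := by
        intro h
        rw [h, div_zero] at hrs
        rw [hrs, zero_pow (by omega)] at hcR
        exact absurd hcR.symm hx₁pos.ne'
      have hr : aeval x₁ r ≠ 0 := by
        intro h
        rw [h, zero_div] at hrs
        rw [hrs, zero_pow (by omega)] at hcR
        exact absurd hcR.symm hx₁pos.ne'
      have key : aeval x₁ (r ^ m) = aeval x₁ (X * s ^ m) := by
        have h := hcR
        rw [hrs, div_pow, div_eq_iff (pow_ne_zero m hs)] at h
        simp only [map_mul, map_pow, aeval_X]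
        rw [h]
      have hpoly : r ^ m = X * s ^ m := hinj key
      have hrne : r ≠ 0 := fun h => hr (by simp [h])
      have hsne : s ≠ 0 := fun h => hs (by simp [h])
      have hdeg := congrArg natDegree hpoly
      rw [natDegree_pow, natDegree_mul X_ne_zero (pow_ne_zero m hsne), natDegree_X,
        natDegree_pow] at hdeg
      have hAB : s.natDegree < r.natDegree := by nlinarith
      have : m * (r.natDegree - s.natDegree) = 1 := by
        rw [Nat.mul_sub]; omega
      have : m ∣ 1 := ⟨_, this.symm⟩
      exact absurd (Nat.le_of_dvd one_pos this) (by omega)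
    have hirr := X_pow_sub_C_irreducible_of_prime hm hpow
    have haeval : aeval u (X ^ m - C (AdjoinSimple.gen E x₁)) = 0 := by
      simp only [map_sub, map_pow, aeval_X, aeval_C, AdjoinSimple.algebraMap_gen]
      simp [hum]
    have hmin : minpoly E⟮x₁⟯ u = X ^ m - C (AdjoinSimple.gen E x₁) :=
      (minpoly.eq_of_irreducible_of_monic hirr haeval (monic_X_pow_sub_C _ (by omega))).symm
    have hx2 : (b : ℝ) + u = u + algebraMap E⟮x₁⟯ ℝ ((b : ℚ) : E⟮x₁⟯) := by
      push_cast; ring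
    rw [hx2, minpoly.add_algebraMap, natDegree_comp, hmin, natDegree_X_pow_sub_C,
      natDegree_X_sub_C, mul_one]
    omega
end
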